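/- arXiv:2604.00315 — 2 statements merged into one kernel-verified Lean document; each statement's English description precedes it below -/
import Mathlib

section
/- Let L: ℝ^d × ℝ × ℝ^d → ℝ be measurable and suppose there exist ν: ℝ → [1,∞) locally integrable such that |L(x,t,v) - L(y,s,v)| ≤ ν_t + ν_s for all x,y,v,t,s, and v ↦ L(x,t,v) is convex for each (x,t). Then for any absolutely continuous curve γ: [s,t] → ℝ^d, ∫_s^t L(γ(r),r,γ'(r)) dr ≥ ∫_s^t L(γ(r),r,(γ(t)-γ(s))/(t-s)) dr − 2∫_s^t ν_r dr. -/
open MeasureTheory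

/-- Jensen-type inequality along a curve. If `L` is measurable,
convex in the velocity variable, and its space-time oscillation is controlled by
`|L(x,t,v) - L(y,s,v)| ≤ ν t + ν s` with `ν ≥ 1` locally integrable, then for any
(differentiable, hence absolutely continuous) curve `γ : [s,t] → ℝ^d` with
integrable action,
`∫_s^t L(γ r, r, γ'(r)) dr ≥ ∫_s^t L(γ r, r, (γ t - γ s)/(t-s)) dr - 2 ∫_s^t ν r dr`. -/
theorem stmt2 (d : ℕ) (hd : 1 ≤ d)
    (L : (Fin d → ℝ) → ℝ → (Fin d → ℝ) → ℝ)
    (hLmeas : Measurable (fun p : ((Fin d → ℝ) × ℝ × (Fin d → ℝ)) => L p.1 p.2.1 p.2.2))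
    (hLconv : ∀ x : Fin d → ℝ, ∀ t : ℝ, ConvexOn ℝ Set.univ (fun v => L x t v))
    (ν : ℝ → ℝ) (hν1 : ∀ r : ℝ, 1 ≤ ν r) (hνloc : LocallyIntegrable ν volume)
    (s t : ℝ) (hst : s < t)
    (γ dγ : ℝ → (Fin d → ℝ))
    (hγ : ∀ r ∈ Set.Icc s t, HasDerivAt γ (dγ r) r)
    (hosc : ∀ (x y v : Fin d → ℝ) (t' s' : ℝ), |L x t' v - L y s' v| ≤ ν t' + ν s')
    (hint1 : IntervalIntegrable (fun r => L (γ r) r (dγ r)) volume s t)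
    (hint2 : IntervalIntegrable (fun r => L (γ r) r ((t - s)⁻¹ • (γ t - γ s))) volume s t) :
    ∫ r in s..t, L (γ r) r (dγ r) ≥
      (∫ r in s..t, L (γ r) r ((t - s)⁻¹ • (γ t - γ s))) - 2 * ∫ r in s..t, ν r := by
  have hts : (0:ℝ) < t - s := sub_pos.2 hst
  set A : Fin d → ℝ := (t - s)⁻¹ • (γ t - γ s) with hA
  -- continuity of γ on [s,t]
  have hγc : ContinuousOn γ (Set.Icc s t) := fun r hr =>
    (hγ r hr).continuousAt.continuousWithinAt
  -- ν is integrable on [s,t]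
  have hνIcc : IntegrableOn ν (Set.Icc s t) := hνloc.integrableOn_isCompact isCompact_Icc
  have hνII : IntervalIntegrable ν volume s t :=
    (intervalIntegrable_iff_integrableOn_Icc_of_le hst.le).2 hνIcc
  -- measurability of r ↦ L (γ r) r v on [s,t]
  have hmeasL : ∀ v, AEStronglyMeasurable (fun r => L (γ r) r v)
      (volume.restrict (Set.Icc s t)) := by
    intro v
    have h1 : ContinuousOn (fun r => ((γ r, r, v) : (Fin d → ℝ) × ℝ × (Fin d → ℝ)))
        (Set.Icc s t) := hγc.prodMk (continuousOn_id.prodMk continuousOn_const)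
    exact (hLmeas.comp_aemeasurable (h1.aemeasurable measurableSet_Icc)).aestronglyMeasurable
  -- integrability of r ↦ L (γ r) r v on [s,t], for each fixed v
  have hLint : ∀ v, IntegrableOn (fun r => L (γ r) r v) (Set.Icc s t) := by
    intro v
    refine Integrable.mono' (g := fun r => (|L (γ s) s v| + ν s) + ν r)
      ((integrable_const _).add hνIcc) (hmeasL v) ?_
    filter_upwards with r
    have h1 := hosc (γ r) (γ s) v r s
    have h2 : |L (γ r) r v| - |L (γ s) s v| ≤ |L (γ r) r v - L (γ s) s v| :=
      abs_sub_abs_le_abs_sub _ _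
    rw [Real.norm_eq_abs]; linarith
  have hII : ∀ v, IntervalIntegrable (fun r => L (γ r) r v) volume s t := fun v =>
    (intervalIntegrable_iff_integrableOn_Icc_of_le hst.le).2 (hLint v)
  set I : (Fin d → ℝ) → ℝ := fun v => ∫ r in s..t, L (γ r) r v with hI
  set J : ℝ := ∫ r in s..t, ν r with hJ
  -- I is convex
  have hIconv : ConvexOn ℝ Set.univ I := by
    refine ⟨convex_univ, fun v _ w _ a b ha hb hab => ?_⟩
    have h1 : ∀ r ∈ Set.Icc s t,
        L (γ r) r (a • v + b • w) ≤ a * L (γ r) r v + b * L (γ r) r w := fun r hr =>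
      (hLconv (γ r) r).2 (Set.mem_univ v) (Set.mem_univ w) ha hb hab
    calc I (a • v + b • w) ≤ ∫ r in s..t, (a * L (γ r) r v + b * L (γ r) r w) :=
          intervalIntegral.integral_mono_on hst.le (hII _)
            (((hII v).const_mul a).add ((hII w).const_mul b)) h1
      _ = a • I v + b • I w := by
          rw [intervalIntegral.integral_add ((hII v).const_mul a) ((hII w).const_mul b),
            intervalIntegral.integral_const_mul, intervalIntegral.integral_const_mul]
          simp [smul_eq_mul]
          rfl
  -- I is continuous
  have hIcont : Continuous I := by
    exact continuousOn_univ.mp (hIconv.continuousOn isOpen_univ)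
  -- subgradient of I at A
  obtain ⟨q, hq⟩ : ∃ q : (Fin d → ℝ) →L[ℝ] ℝ, ∀ v, I A + (q v - q A) ≤ I v := by
    set S : Set ((Fin d → ℝ) × ℝ) := {p | I p.1 < p.2} with hS
    have hSconv : Convex ℝ S := by
      intro p hp p' hp' a b ha hb hab
      simp only [hS, Set.mem_setOf_eq] at *
      have h1 : I (a • p.1 + b • p'.1) ≤ a * I p.1 + b * I p'.1 :=
        hIconv.2 (Set.mem_univ _) (Set.mem_univ _) ha hb hab
      have h2 : a * I p.1 + b * I p'.1 < a * p.2 + b * p'.2 := by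
        rcases ha.eq_or_lt with h | h
        · have hb1 : b = 1 := by linarith
          simp only [← h, hb1]; linarith
        · have h3 : a * I p.1 < a * p.2 := by nlinarith
          have h4 : b * I p'.1 ≤ b * p'.2 := by nlinarith
          linarith
      simpa using lt_of_le_of_lt h1 h2
    have hSopen : IsOpen S := isOpen_lt (hIcont.comp continuous_fst) continuous_snd
    have hAnot : ((A, I A) : (Fin d → ℝ) × ℝ) ∉ S := by simp [hS]
    obtain ⟨ℓ, hℓ⟩ := geometric_hahn_banach_open_point hSconv hSopen hAnot
    set b : ℝ := ℓ (0, 1) with hbdef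
    have hdecomp : ∀ (v : Fin d → ℝ) (y : ℝ), ℓ (v, y) = ℓ (v, 0) + y * b := by
      intro v y
      have h1 : ((v, y) : (Fin d → ℝ) × ℝ) = (v, 0) + y • ((0 : Fin d → ℝ), (1:ℝ)) := by
        simp [Prod.ext_iff]
      rw [h1, map_add, ℓ.map_smul, smul_eq_mul]
    have hb : b < 0 := by
      have h1 : ((A, I A + 1) : (Fin d → ℝ) × ℝ) ∈ S := by simp [hS]
      have h2 := hℓ _ h1
      rw [hdecomp A (I A + 1), hdecomp A (I A)] at h2
      nlinarith
    -- for every v : ℓ(v,0) + I v * b ≤ ℓ(A,0) + I A * b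
    have hkey : ∀ v, ℓ (v, 0) + I v * b ≤ ℓ (A, 0) + I A * b := by
      intro v
      have h0 : ∀ ε : ℝ, 0 < ε → ℓ (v, 0) + I v * b + ε * b < ℓ (A, 0) + I A * b := by
        intro ε hε
        have h1 : ((v, I v + ε) : (Fin d → ℝ) × ℝ) ∈ S := by simp [hS, hε]
        have h2 := hℓ _ h1
        rw [hdecomp v (I v + ε), hdecomp A (I A)] at h2
        nlinarith
      by_contra hcon
      push_neg at hcon
      have hb0 : b ≠ 0 := ne_of_lt hb
      have hε : 0 < (ℓ (v, 0) + I v * b - (ℓ (A, 0) + I A * b)) / (-b) :=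
        div_pos (by linarith) (by linarith)
      have h2 := h0 _ hε
      have h3 : (ℓ (v, 0) + I v * b - (ℓ (A, 0) + I A * b)) / (-b) * b
          = -(ℓ (v, 0) + I v * b - (ℓ (A, 0) + I A * b)) := by
        have hb1 : b / -b = -1 := by rw [div_neg, div_self hb0]
        rw [div_mul_eq_mul_div, mul_div_assoc, hb1, mul_neg_one]
      linarith
    refine ⟨(-b)⁻¹ • (ℓ.comp (ContinuousLinearMap.inl ℝ (Fin d → ℝ) ℝ)), fun v => ?_⟩
    have h1 := hkey v
    have hbne : (0:ℝ) < -b := by linarith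
    have hb0 : b ≠ 0 := ne_of_lt hb
    simp only [ContinuousLinearMap.smul_apply, ContinuousLinearMap.comp_apply,
      ContinuousLinearMap.inl_apply, smul_eq_mul]
    have h4 := mul_le_mul_of_nonneg_left
      (show ℓ (v, 0) - ℓ (A, 0) ≤ (I A - I v) * b by linarith)
      (le_of_lt (inv_pos.2 hbne))
    have h5 : (-b)⁻¹ * ((I A - I v) * b) = -(I A - I v) := by
      field_simp
    have h6 : (-b)⁻¹ * ℓ (v, 0) - (-b)⁻¹ * ℓ (A, 0) = (-b)⁻¹ * (ℓ (v, 0) - ℓ (A, 0)) :=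
      (mul_sub _ _ _).symm
    linarith
  -- pointwise upper bound on I v using oscillation
  have hIv : ∀ r ∈ Set.Icc s t, ∀ v, I v ≤ (t - s) * (L (γ r) r v + ν r) + J := by
    intro r hr v
    have h1 : ∀ r' ∈ Set.Icc s t, L (γ r') r' v ≤ (L (γ r) r v + ν r) + ν r' := by
      intro r' hr'
      have := abs_le.1 (hosc (γ r') (γ r) v r' r)
      linarith [this.2]
    calc I v ≤ ∫ r' in s..t, ((L (γ r) r v + ν r) + ν r') :=
          intervalIntegral.integral_mono_on hst.le (hII v)
            (intervalIntegrable_const.add hνII) h1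
      _ = (t - s) * (L (γ r) r v + ν r) + J := by
          rw [intervalIntegral.integral_add intervalIntegrable_const hνII,
            intervalIntegral.integral_const, smul_eq_mul]
  -- apply the one-sided FTC inequality to g = q ∘ γ
  set X : ℝ := ∫ r in s..t, L (γ r) r (dγ r) with hX
  set φ : ℝ → ℝ := fun r => (t - s) * (L (γ r) r (dγ r) + ν r) + (J - I A + q A) with hφ
  have hφint : IntegrableOn φ (Set.Icc s t) := by
    have h1 : IntegrableOn (fun r => L (γ r) r (dγ r)) (Set.Icc s t) :=
      (intervalIntegrable_iff_integrableOn_Icc_of_le hst.le).1 hint1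
    exact (((h1.add hνIcc).const_mul (t - s)).add (integrable_const _))
  have hgcont : ContinuousOn (fun r => q (γ r)) (Set.Icc s t) :=
    q.continuous.comp_continuousOn hγc
  have hgderiv : ∀ r ∈ Set.Ioo s t,
      HasDerivWithinAt (fun r => q (γ r)) (q (dγ r)) (Set.Ioi r) r := fun r hr =>
    (q.hasFDerivAt.comp_hasDerivAt r (hγ r (Set.mem_Icc_of_Ioo hr))).hasDerivWithinAt
  have hφg : ∀ r ∈ Set.Ioo s t, q (dγ r) ≤ φ r := by
    intro r hr
    have h1 := hq (dγ r)
    have h2 := hIv r (Set.mem_Icc_of_Ioo hr) (dγ r)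
    simp only [hφ]; linarith
  have hmain := intervalIntegral.sub_le_integral_of_hasDeriv_right_of_le hst.le hgcont
    hgderiv hφint hφg
  -- compute both sides
  have hLHS : q (γ t) - q (γ s) = (t - s) * q A := by
    have h1 : γ t - γ s = (t - s) • A := by
      rw [hA, smul_smul, mul_inv_cancel₀ (ne_of_gt hts), one_smul]
    have h2 : q (γ t) - q (γ s) = q (γ t - γ s) := by rw [map_sub]
    rw [h2, h1, q.map_smul, smul_eq_mul]
  have hRHS : (∫ r in s..t, φ r) = (t - s) * (X + J) + (t - s) * (J - I A + q A) := by
    have h1 : IntervalIntegrable (fun r => L (γ r) r (dγ r) + ν r) volume s t :=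
      hint1.add hνII
    simp only [hφ]
    rw [intervalIntegral.integral_add (h1.const_mul _) intervalIntegrable_const,
      intervalIntegral.integral_const_mul,
      intervalIntegral.integral_add hint1 hνII, intervalIntegral.integral_const,
      smul_eq_mul]
    try ring
  rw [hLHS, hRHS] at hmain
  have hfin : I A - 2 * J ≤ X := by nlinarith
  exact hfin
end

section
/- Let (Ω_1 × Ω_2, F_1 ⊗ F_2, P) be a product probability space, and let F_3 ⊆ F_2 be a sub-σ-field. For j = 2,3 let F̃_j = {Ω_1 × B : B ∈ F_j}, sub-σ-fields of F_1 ⊗ F_2. Then for any integrable random variable X measurable with respect to F_1 ⊗ F_3, E[X | F̃_2] = E[X | F̃_3] almost surely. -/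
open MeasureTheory

/-- On a product probability space `(Ω₁ × Ω₂, F₁ ⊗ F₂, P₁ ⊗ P₂)`,
if `F₃ ⊆ F₂` is a sub-σ-field, `F̃ⱼ = {Ω₁ × B : B ∈ Fⱼ}` (the σ-fields pulled
back through the second projection), and `X` is integrable and measurable with
respect to `F₁ ⊗ F₃`, then `E[X | F̃₂] = E[X | F̃₃]` almost surely. -/
theorem stmt8 {Ω₁ Ω₂ : Type*} [m₁ : MeasurableSpace Ω₁] [m₂ : MeasurableSpace Ω₂]
    (P₁ : Measure Ω₁) (P₂ : Measure Ω₂)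
    [IsProbabilityMeasure P₁] [IsProbabilityMeasure P₂]
    (m₃ : {m : MeasurableSpace Ω₂ // m ≤ m₂})
    (X : Ω₁ × Ω₂ → ℝ)
    (hXint : Integrable X (P₁.prod P₂))
    (hXmeas : Measurable[m₁.prod m₃.1] X) :
    (P₁.prod P₂)[X | MeasurableSpace.comap Prod.snd m₂]
      =ᵐ[P₁.prod P₂] (P₁.prod P₂)[X | MeasurableSpace.comap Prod.snd m₃.1] := by
  set g : Ω₂ → ℝ := fun y => ∫ x, X (x, y) ∂P₁ with hg_def
  set Y : Ω₁ × Ω₂ → ℝ := fun p => g p.2 with hY_def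
  -- g is strongly measurable with respect to m₃.1
  have hg_sm3 : StronglyMeasurable[m₃.1] g := by
    have hXsm : StronglyMeasurable[m₁.prod m₃.1] X := hXmeas.stronglyMeasurable
    exact @MeasureTheory.StronglyMeasurable.integral_prod_left' Ω₁ Ω₂ ℝ m₁ m₃.1 P₁ _ _ _ X hXsm
  -- g is integrable w.r.t. P₂
  have hg_int : Integrable g P₂ := hXint.integral_prod_right
  -- Y is integrable w.r.t. P₁.prod P₂
  have hY_int : Integrable Y (P₁.prod P₂) := by
    have hmap : (P₁.prod P₂).map Prod.snd = P₂ := by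
      rw [Measure.map_snd_prod, measure_univ, one_smul]
    rw [← hmap] at hg_int
    exact hg_int.comp_measurable measurable_snd
  -- key set-integral computation
  have hset : ∀ B : Set Ω₂, MeasurableSet B →
      ∫ p in Prod.snd ⁻¹' B, Y p ∂(P₁.prod P₂) = ∫ p in Prod.snd ⁻¹' B, X p ∂(P₁.prod P₂) := by
    intro B hB
    have hpre : Prod.snd ⁻¹' B = (Set.univ : Set Ω₁) ×ˢ B := by
      ext p; simp [Set.mem_preimage, Set.mem_prod]
    have hrestr : (P₁.prod P₂).restrict (Prod.snd ⁻¹' B) = P₁.prod (P₂.restrict B) := by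
      rw [hpre, ← Measure.prod_restrict, Measure.restrict_univ]
    have hXint' : Integrable X (P₁.prod (P₂.restrict B)) := by
      rw [← hrestr]; exact hXint.integrableOn
    have hYint' : Integrable Y (P₁.prod (P₂.restrict B)) := by
      rw [← hrestr]; exact hY_int.integrableOn
    calc ∫ p in Prod.snd ⁻¹' B, Y p ∂(P₁.prod P₂)
        = ∫ p, Y p ∂(P₁.prod (P₂.restrict B)) := by rw [hrestr]
      _ = ∫ y, ∫ x, Y (x, y) ∂P₁ ∂(P₂.restrict B) := integral_prod_symm Y hYint'
      _ = ∫ y, ∫ x, X (x, y) ∂P₁ ∂(P₂.restrict B) := by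
          refine integral_congr_ae (Filter.Eventually.of_forall fun y => ?_)
          simp [hY_def, hg_def, integral_const, measure_univ]
      _ = ∫ p, X p ∂(P₁.prod (P₂.restrict B)) := (integral_prod_symm X hXint').symm
      _ = ∫ p in Prod.snd ⁻¹' B, X p ∂(P₁.prod P₂) := by rw [hrestr]
  -- general claim: for any sub-σ-field m of m₂ for which g is strongly measurable,
  -- Y is a version of the conditional expectation
  have key : ∀ mm : {m : MeasurableSpace Ω₂ // m ≤ m₂}, StronglyMeasurable[mm.1] g →
      Y =ᵐ[P₁.prod P₂] (P₁.prod P₂)[X | MeasurableSpace.comap Prod.snd mm.1] := by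
    intro mm hgm
    have hle : MeasurableSpace.comap Prod.snd mm.1 ≤ m₁.prod m₂ :=
      le_trans (MeasurableSpace.comap_mono mm.2) (measurable_snd.comap_le)
    haveI : SigmaFinite ((P₁.prod P₂).trim hle) := by infer_instance
    refine ae_eq_condExp_of_forall_setIntegral_eq hle hXint ?_ ?_ ?_
    · intro s _ _; exact hY_int.integrableOn
    · rintro s ⟨B, hB, rfl⟩ _
      exact hset B (mm.2 B hB)
    · refine ⟨Y, ?_, Filter.EventuallyEq.rfl⟩
      exact hgm.comp_measurable (comap_measurable Prod.snd)
  exact (key ⟨m₂, le_rfl⟩ (hg_sm3.mono m₃.2)).symm.trans (key m₃ hg_sm3)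
end
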